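/- arXiv:math/0507070 — 2 statements merged into one kernel-verified Lean document; each statement's English description precedes it below -/
import Mathlib

section
/- Let R be a commutative local ring, π ∈ R a nonzerodivisor, and n ≥ 1. Let V be a free R-module of rank n, let φ : V → (R/πR)^s be a surjective R-linear map onto the free R/πR-module of rank s (where 0 ≤ s ≤ n), and let V' = ker φ ⊆ V. Then V' is a free R-module of rank n, and the image of the induced map on top exterior powers Λⁿ_R V' → Λⁿ_R V is exactly the submodule π^s · Λⁿ_R V. -/
set_option synthInstance.maxHeartbeats 1000000
set_option maxHeartbeats 1000000
set_option maxSynthPendingDepth 3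

universe u v

open ExteriorAlgebra

private lemma auxDetSmul {R M N : Type*} [CommRing R] [AddCommGroup M] [Module R M]
    [AddCommGroup N] [Module R N] {n : ℕ} (b : Module.Basis (Fin n) R M)
    (g : M [⋀^Fin n]→ₗ[R] N) (v : Fin n → M) :
    g v = b.det v • g ⇑b := by
  have h : g = (b.det).smulRight (g ⇑b) := by
    refine Module.Basis.ext_alternating b fun w hw => ?_
    have hb := Finite.injective_iff_bijective.mp hw
    have h1 : (fun i => b (w i)) = ⇑b ∘ ⇑(Equiv.ofBijective w hb) := rfl
    rw [h1, g.map_perm, AlternatingMap.smulRight_apply, b.det.map_perm, Module.Basis.det_self]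
    rw [Units.smul_def, Units.smul_def, zsmul_one, Int.cast_smul_eq_zsmul]
  conv_lhs => rw [h]
  simp [AlternatingMap.smulRight_apply]

private lemma auxSpanTop {R M : Type*} [CommRing R] [AddCommGroup M] [Module R M]
    {n : ℕ} (b : Module.Basis (Fin n) R M) :
    ⋀[R]^n M = Submodule.span R {ExteriorAlgebra.ιMulti R n ⇑b} := by
  rw [← ExteriorAlgebra.ιMulti_span_fixedDegree]
  refine le_antisymm (Submodule.span_le.mpr ?_) (Submodule.span_le.mpr ?_)
  · rintro _ ⟨v, rfl⟩
    rw [auxDetSmul b (ExteriorAlgebra.ιMulti R n) v]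
    exact Submodule.smul_mem _ _ (Submodule.mem_span_singleton_self _)
  · intro x hx
    rw [Set.mem_singleton_iff] at hx
    subst hx
    exact Submodule.subset_span ⟨⇑b, rfl⟩

private lemma auxCardFilter {n s : ℕ} (hs : s ≤ n) :
    (Finset.univ.filter fun i : Fin n => (i : ℕ) < s).card = s := by
  rw [← Fintype.card_subtype]
  have e : {i : Fin n // (i : ℕ) < s} ≃ Fin s :=
    { toFun := fun i => ⟨i.1, i.2⟩
      invFun := fun j => ⟨Fin.castLE hs j, j.2⟩
      left_inv := fun i => Subtype.ext (Fin.ext rfl)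
      right_inv := fun j => Fin.ext rfl }
  rw [Fintype.card_congr e, Fintype.card_fin]

private lemma auxFinish {R : Type u} [CommRing R] (π : R) (hπ : π ∈ nonZeroDivisors R)
    {n s : ℕ} (hs : s ≤ n)
    {V : Type v} [AddCommGroup V] [Module R V]
    (φ : V →ₗ[R] (Fin s → R ⧸ Ideal.span {π}))
    (fB : Module.Basis (Fin n) R V)
    (h1 : ∀ (i : Fin n) (h : (i : ℕ) < s), φ (fB i) = Pi.single (⟨i, h⟩ : Fin s) 1)
    (h2 : ∀ (i : Fin n), ¬ (i : ℕ) < s → φ (fB i) = 0) :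
    Nonempty (Module.Basis (Fin n) R (LinearMap.ker φ)) ∧
    Submodule.map (ExteriorAlgebra.map (LinearMap.ker φ).subtype).toLinearMap
        (⋀[R]^n (LinearMap.ker φ))
      = Ideal.span {π ^ s} • (⋀[R]^n V) := by
  classical
  set Q := R ⧸ Ideal.span {π} with hQ
  have hπQ : ∀ q : Q, π • q = 0 := by
    intro q
    obtain ⟨x, rfl⟩ := Ideal.Quotient.mk_surjective q
    rw [← Ideal.Quotient.mk_eq_mk, ← Submodule.Quotient.mk_smul]
    rw [Submodule.Quotient.mk_eq_zero]
    exact Ideal.mul_mem_right x _ (Ideal.subset_span rfl)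
  set d : Fin n → R := fun i => if (i : ℕ) < s then π else 1 with hd
  have cmem : ∀ i : Fin n, d i • fB i ∈ LinearMap.ker φ := by
    intro i
    rw [LinearMap.mem_ker, map_smul]
    by_cases h : (i : ℕ) < s
    · simp only [hd, if_pos h]
      funext j
      simp [hπQ]
    · simp [hd, if_neg h, h2 i h]
  set c' : Fin n → LinearMap.ker φ := fun i => ⟨d i • fB i, cmem i⟩ with hc'
  have hdnzd : ∀ i : Fin n, d i ∈ nonZeroDivisors R := by
    intro i
    by_cases h : (i : ℕ) < s
    · simpa [hd, if_pos h] using hπ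
    · simp only [hd, if_neg h]
      exact one_mem _
  have indep : LinearIndependent R c' := by
    rw [Fintype.linearIndependent_iff]
    intro g hg i
    have hval : (∑ i, (g i * d i) • fB i) = 0 := by
      have := congrArg (Subtype.val) hg
      simpa [hc', mul_smul, Finset.sum_apply', mul_comm] using this
    have := Fintype.linearIndependent_iff.mp fB.linearIndependent (fun i => g i * d i) hval i
    exact mem_nonZeroDivisors_iff_right.mp (hdnzd i) (g i) this
  have hspan : ⊤ ≤ Submodule.span R (Set.range c') := by
    intro z _
    set a : Fin n → R := fun i => fB.repr (z : V) i with ha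
    have hrepr : (∑ i, a i • fB i) = (z : V) := fB.sum_repr (z : V)
    have hzker : φ (z : V) = 0 := z.2
    have h0 : (∑ i, a i • φ (fB i)) = 0 := by
      rw [← hrepr] at hzker
      simpa using hzker
    have Hdvd : ∀ i : Fin n, (i : ℕ) < s → π ∣ a i := by
      intro i hi
      have hj := congrFun h0 (⟨i, hi⟩ : Fin s)
      rw [Finset.sum_apply] at hj
      have hsum : (∑ i' : Fin n, (a i' • φ (fB i')) (⟨i, hi⟩ : Fin s))
          = a i • (1 : Q) := by
        have hstep : (∑ i' : Fin n, (a i' • φ (fB i')) (⟨i, hi⟩ : Fin s))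
            = (a i • φ (fB i)) (⟨i, hi⟩ : Fin s) := by
          refine Finset.sum_eq_single i ?_ (fun h => absurd (Finset.mem_univ i) h)
          intro i' _ hne
          by_cases h' : (i' : ℕ) < s
          · rw [h1 i' h']
            have hne' : (⟨i', h'⟩ : Fin s) ≠ ⟨i, hi⟩ := by
              intro hcon
              have hval : (i' : ℕ) = (i : ℕ) := by simpa [Fin.mk.injEq] using hcon
              exact hne (Fin.ext hval)
            rw [Pi.smul_apply, Pi.single_eq_of_ne (Ne.symm hne'), smul_zero]
          · simp [h2 i' h']
        rw [hstep, h1 i hi]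
        simp
      rw [hsum] at hj
      rw [← Ideal.mem_span_singleton, ← Ideal.Quotient.eq_zero_iff_mem]
      have heq : a i • (1 : Q) = Ideal.Quotient.mk (Ideal.span {π}) (a i) := by
        rw [← Ideal.Quotient.mk_eq_mk,
          show (1 : Q) = Submodule.Quotient.mk (1 : R) from rfl,
          ← Submodule.Quotient.mk_smul, smul_eq_mul, mul_one]
      rw [← heq]
      simpa using hj
    set b' : Fin n → R := fun i => if h : (i : ℕ) < s then (Hdvd i h).choose else a i with hb'
    have hzb : (z : V) = ∑ i, b' i • (c' i : V) := by
      rw [← hrepr]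
      refine Finset.sum_congr rfl fun i _ => ?_
      by_cases h : (i : ℕ) < s
      · simp only [hb', hc', hd, dif_pos h, if_pos h]
        rw [smul_smul, mul_comm, ← (Hdvd i h).choose_spec]
      · simp [hb', hc', hd, dif_neg h, if_neg h]
    refine (Submodule.mem_span_range_iff_exists_fun R).mpr ⟨b', Subtype.ext ?_⟩
    rw [hzb]
    simp
  set cB : Module.Basis (Fin n) R (LinearMap.ker φ) := Module.Basis.mk indep hspan with hcB
  refine ⟨⟨cB⟩, ?_⟩
  have hcBa : ⇑cB = c' := funext fun i => Module.Basis.mk_apply indep hspan i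
  rw [auxSpanTop cB, auxSpanTop fB, Submodule.map_span, Set.image_singleton]
  have key : (ExteriorAlgebra.map (LinearMap.ker φ).subtype).toLinearMap
      (ExteriorAlgebra.ιMulti R n ⇑cB)
      = (π ^ s) • ExteriorAlgebra.ιMulti R n ⇑fB := by
    rw [AlgHom.toLinearMap_apply, hcBa, ExteriorAlgebra.map_apply_ιMulti]
    have hcomp : ((LinearMap.ker φ).subtype ∘ c') = fun i => d i • fB i := rfl
    rw [hcomp]
    have hms : ((ExteriorAlgebra.ιMulti R n (M := V)) fun i => d i • fB i)
        = (∏ i : Fin n, d i) • ExteriorAlgebra.ιMulti R n ⇑fB :=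
      (ExteriorAlgebra.ιMulti R n (M := V)).toMultilinearMap.map_smul_univ d ⇑fB
    rw [hms]
    congr 1
    rw [hd, Finset.prod_ite, Finset.prod_const, Finset.prod_const_one, mul_one,
      auxCardFilter hs]
  rw [key, Submodule.ideal_span_singleton_smul, Submodule.smul_span,
    Set.smul_set_singleton]

private lemma auxSumSingle {R : Type u} [CommRing R] (π : R) {s : ℕ} (c : Fin s → R)
    (i : Fin s) :
    (∑ j, c j • (Pi.single j 1 : Fin s → R ⧸ Ideal.span {π})) i
      = Ideal.Quotient.mk (Ideal.span {π}) (c i) := by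
  classical
  rw [Finset.sum_apply]
  rw [Finset.sum_eq_single i ?_ (fun h => absurd (Finset.mem_univ i) h)]
  · rw [Pi.smul_apply, Pi.single_eq_same, ← Ideal.Quotient.mk_eq_mk,
      show (1 : R ⧸ Ideal.span {π}) = Submodule.Quotient.mk (1 : R) from rfl,
      ← Submodule.Quotient.mk_smul, smul_eq_mul, mul_one]
  · intro j _ hne
    rw [Pi.smul_apply, Pi.single_eq_of_ne (Ne.symm hne), smul_zero]

private lemma auxConstruct {R : Type u} [CommRing R] [IsLocalRing R] (π : R)
    (hπu : ¬ IsUnit π) {n s : ℕ} (hs : s ≤ n)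
    {V : Type v} [AddCommGroup V] [Module R V] (bV : Module.Basis (Fin n) R V)
    (φ : V →ₗ[R] (Fin s → R ⧸ Ideal.span {π})) (hφ : Function.Surjective φ) :
    ∃ fB : Module.Basis (Fin n) R V,
      (∀ (i : Fin n) (h : (i : ℕ) < s), φ (fB i) = Pi.single (⟨i, h⟩ : Fin s) 1) ∧
      (∀ (i : Fin n), ¬ (i : ℕ) < s → φ (fB i) = 0) := by
  classical
  haveI : Module.Finite R V := Module.Finite.of_basis bV
  set m := IsLocalRing.maximalIdeal R with hm
  have hπm : π ∈ m := hπu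
  have hspanm : Ideal.span {π} ≤ m := by
    rw [Ideal.span_le, Set.singleton_subset_iff]; exact hπm
  letI kF : Field (R ⧸ m) := Ideal.Quotient.field m
  set p : V →ₗ[R] V ⧸ (m • ⊤ : Submodule R V) := Submodule.mkQ (m • ⊤) with hp
  have hksmul : ∀ (r : R) (x : V ⧸ (m • ⊤ : Submodule R V)),
      Ideal.Quotient.mk m r • x = r • x := by
    intro r x
    obtain ⟨v, rfl⟩ := Submodule.mkQ_surjective _ x
    rw [Submodule.mkQ_apply, Module.Quotient.mk_smul_mk, Submodule.Quotient.mk_smul]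
  -- choice of u
  have hu : ∀ j : Fin s, ∃ x : V, φ x = Pi.single j 1 := fun j => hφ (Pi.single j 1)
  set u : Fin s → V := fun j => (hu j).choose with hudef
  have huspec : ∀ j, φ (u j) = Pi.single j 1 := fun j => (hu j).choose_spec
  -- the submodule K
  set K : Submodule (R ⧸ m) (V ⧸ (m • ⊤ : Submodule R V)) :=
    { carrier := p '' (LinearMap.ker φ)
      add_mem' := by
        rintro _ _ ⟨y₁, hy₁, rfl⟩ ⟨y₂, hy₂, rfl⟩
        exact ⟨y₁ + y₂, add_mem hy₁ hy₂, map_add _ _ _⟩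
      zero_mem' := ⟨0, zero_mem _, map_zero _⟩
      smul_mem' := by
        rintro c _ ⟨y, hy, rfl⟩
        obtain ⟨r, rfl⟩ := Ideal.Quotient.mk_surjective c
        rw [hksmul]
        exact ⟨r • y, Submodule.smul_mem _ _ hy, map_smul _ _ _⟩ } with hK
  have hmemK : ∀ x, x ∈ K ↔ ∃ y ∈ LinearMap.ker φ, p y = x := by
    intro x; constructor
    · rintro ⟨y, hy, rfl⟩; exact ⟨y, hy, rfl⟩
    · rintro ⟨y, hy, rfl⟩; exact ⟨y, hy, rfl⟩
  -- quotient arithmetic helper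
  have hQm : ∀ r : R, Ideal.Quotient.mk (Ideal.span {π}) r
      ∈ (m • ⊤ : Submodule R (R ⧸ Ideal.span {π})) → r ∈ m := by
    intro r hr
    have hmap : (m • ⊤ : Submodule R (R ⧸ Ideal.span {π}))
        = Submodule.map (Ideal.span {π} : Submodule R R).mkQ (m • ⊤) := by
      rw [Submodule.map_smul'', Submodule.map_top, Submodule.range_mkQ]
    rw [hmap] at hr
    obtain ⟨t, htm, hteq⟩ := hr
    have htm' : t ∈ m := by
      have hle : (m • ⊤ : Submodule R R) ≤ m :=
        Submodule.smul_le.2 fun r hr x _ => by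
          rw [smul_eq_mul]; exact Ideal.mul_mem_right x m hr
      exact hle htm
    have hsub : t - r ∈ Ideal.span {π} := by
      rw [← Submodule.Quotient.eq]
      exact hteq
    have : r = t - (t - r) := by ring
    rw [this]
    exact m.sub_mem htm' (hspanm hsub)
  -- the key coefficient lemma
  have hcoef : ∀ y ∈ LinearMap.ker φ, ∀ c : Fin s → R,
      p y = ∑ j, c j • p (u j) → ∀ i, c i ∈ m := by
    intro y hy c hpc i
    have h1 : p (y - ∑ j, c j • u j) = 0 := by
      rw [map_sub, map_sum, hpc]
      simp only [map_smul]
      exact sub_self _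
    have h2 : y - ∑ j, c j • u j ∈ (m • ⊤ : Submodule R V) :=
      (Submodule.Quotient.mk_eq_zero _).mp h1
    have h3 : φ (y - ∑ j, c j • u j) ∈ (m • ⊤ : Submodule R (Fin s → R ⧸ Ideal.span {π})) := by
      have := Submodule.mem_map_of_mem (f := φ) h2
      rw [Submodule.map_smul''] at this
      exact Submodule.smul_mono le_rfl le_top this
    have h4 : ((φ (y - ∑ j, c j • u j)) i : R ⧸ Ideal.span {π})
        ∈ (m • ⊤ : Submodule R (R ⧸ Ideal.span {π})) := by
      have := Submodule.mem_map_of_mem (f := LinearMap.proj (R := R) i) h3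
      rw [Submodule.map_smul''] at this
      exact Submodule.smul_mono le_rfl le_top this
    have h5 : (φ (y - ∑ j, c j • u j)) i
        = - Ideal.Quotient.mk (Ideal.span {π}) (c i) := by
      rw [map_sub, LinearMap.mem_ker.mp hy, zero_sub, map_sum]
      simp only [map_smul, huspec]
      rw [Pi.neg_apply, auxSumSingle]
    rw [h5] at h4
    exact hQm _ (by simpa using neg_mem h4)
  -- spanning of the quotient
  have hKtop : K ⊔ Submodule.span (R ⧸ m) (Set.range fun j : Fin s => p (u j)) = ⊤ := by
    rw [eq_top_iff]
    intro x _
    obtain ⟨v, rfl⟩ := Submodule.mkQ_surjective _ x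
    set c : Fin s → R := fun j => (Ideal.Quotient.mk_surjective (φ v j)).choose with hc
    have hcs : ∀ j, Ideal.Quotient.mk (Ideal.span {π}) (c j) = φ v j :=
      fun j => (Ideal.Quotient.mk_surjective (φ v j)).choose_spec
    have hyker : v - ∑ j, c j • u j ∈ LinearMap.ker φ := by
      rw [LinearMap.mem_ker, map_sub, map_sum]
      simp only [map_smul, huspec]
      rw [sub_eq_zero]
      funext i
      rw [auxSumSingle π c i, hcs i]
    have hdecomp : (m • ⊤ : Submodule R V).mkQ v
        = p (v - ∑ j, c j • u j) + ∑ j, Ideal.Quotient.mk m (c j) • p (u j) := by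
      rw [map_sub, map_sum]
      simp only [map_smul, hksmul]
      abel
    rw [Submodule.mkQ_apply, ← Submodule.mkQ_apply (m • ⊤) v, hdecomp]
    refine Submodule.add_mem_sup ?_ ?_
    · exact ⟨v - ∑ j, c j • u j, hyker, rfl⟩
    · exact Submodule.sum_mem _ fun j _ =>
        Submodule.smul_mem _ _ (Submodule.subset_span ⟨j, rfl⟩)
  -- finite dimensionality
  have hbar_span : Submodule.span (R ⧸ m) (Set.range fun i : Fin n => p (bV i)) = ⊤ := by
    rw [eq_top_iff]
    intro x _
    obtain ⟨v, rfl⟩ := Submodule.mkQ_surjective _ x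
    have hrepr : (∑ i, bV.repr v i • bV i) = v := bV.sum_repr v
    rw [Submodule.mkQ_apply, ← Submodule.mkQ_apply (m • ⊤) v, ← hrepr, map_sum]
    simp only [map_smul]
    refine Submodule.sum_mem _ fun i _ => ?_
    rw [← hksmul]
    exact Submodule.smul_mem _ _ (Submodule.subset_span ⟨i, rfl⟩)
  haveI hfd : FiniteDimensional (R ⧸ m) (V ⧸ (m • ⊤ : Submodule R V)) :=
    Module.finite_def.mpr ⟨(Finset.univ : Finset (Fin n)).image (fun i => p (bV i)), by
      rw [Finset.coe_image, Finset.coe_univ, Set.image_univ]; exact hbar_span⟩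
  have hdimV : Module.finrank (R ⧸ m) (V ⧸ (m • ⊤ : Submodule R V)) ≤ n := by
    have h1 := finrank_span_le_card (R := R ⧸ m) (Set.range fun i : Fin n => p (bV i))
    rw [hbar_span, finrank_top] at h1
    refine h1.trans ?_
    rw [Set.toFinset_card]
    exact (Fintype.card_range_le _).trans (by simp)
  -- u is independent mod m
  have hUli : LinearIndependent (R ⧸ m) (fun j : Fin s => p (u j)) := by
    rw [Fintype.linearIndependent_iff]
    intro g hg i
    set c : Fin s → R := fun j => (Ideal.Quotient.mk_surjective (g j)).choose with hc
    have hcs : ∀ j, Ideal.Quotient.mk m (c j) = g j :=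
      fun j => (Ideal.Quotient.mk_surjective (g j)).choose_spec
    have h0 : p 0 = ∑ j, c j • p (u j) := by
      rw [map_zero, ← hg]
      refine Finset.sum_congr rfl fun j _ => ?_
      rw [← hcs j, hksmul]
    have := hcoef 0 (zero_mem _) c h0 i
    rw [← hcs i, Ideal.Quotient.eq_zero_iff_mem]
    exact this
  have hdisj : K ⊓ Submodule.span (R ⧸ m) (Set.range fun j : Fin s => p (u j)) = ⊥ := by
    rw [eq_bot_iff]
    rintro x ⟨hxK, hxS⟩
    obtain ⟨y, hy, rfl⟩ := (hmemK x).mp hxK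
    obtain ⟨g, hg⟩ := (Submodule.mem_span_range_iff_exists_fun (R ⧸ m)).mp hxS
    set c : Fin s → R := fun j => (Ideal.Quotient.mk_surjective (g j)).choose with hc
    have hcs : ∀ j, Ideal.Quotient.mk m (c j) = g j :=
      fun j => (Ideal.Quotient.mk_surjective (g j)).choose_spec
    have h0 : p y = ∑ j, c j • p (u j) := by
      rw [← hg]
      refine Finset.sum_congr rfl fun j _ => ?_
      rw [← hcs j, hksmul]
    have hcm := hcoef y hy c h0
    have hg0 : ∀ j, g j = 0 := by
      intro j
      rw [← hcs j, Ideal.Quotient.eq_zero_iff_mem]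
      exact hcm j
    have : p y = 0 := by
      rw [h0]
      refine Finset.sum_eq_zero fun j _ => ?_
      rw [← hksmul, hcs j, hg0 j, zero_smul]
    simp [this]
  -- dimension bound for K
  have hdimS : Module.finrank (R ⧸ m)
      (Submodule.span (R ⧸ m) (Set.range fun j : Fin s => p (u j))) = s := by
    rw [finrank_span_eq_card hUli, Fintype.card_fin]
  have hdimK : Module.finrank (R ⧸ m) K ≤ n - s := by
    have h1 := Submodule.finrank_sup_add_finrank_inf_eq K
      (Submodule.span (R ⧸ m) (Set.range fun j : Fin s => p (u j)))
    rw [hdisj, finrank_bot, add_zero, hdimS] at h1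
    have h2 : Module.finrank (R ⧸ m)
        ↥(K ⊔ Submodule.span (R ⧸ m) (Set.range fun j : Fin s => p (u j))) ≤ n :=
      (Submodule.finrank_le _).trans hdimV
    omega
  -- basis of K, padded to length n - s
  set t := Module.finrank (R ⧸ m) K with ht
  set wB : Module.Basis (Fin t) (R ⧸ m) K := Module.finBasis (R ⧸ m) K with hwB
  set pad : Fin (n - s) → K := fun j => if h : (j : ℕ) < t then wB ⟨j, h⟩ else 0 with hpad
  have hKle : K ≤ Submodule.span (R ⧸ m)
      (Set.range fun j : Fin (n - s) => ((pad j : V ⧸ (m • ⊤ : Submodule R V)))) := by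
    have hKeq : K = Submodule.span (R ⧸ m)
        (Set.range fun j : Fin t => ((wB j : V ⧸ (m • ⊤ : Submodule R V)))) := by
      have : (Set.range fun j : Fin t => ((wB j : V ⧸ (m • ⊤ : Submodule R V))))
          = K.subtype '' (Set.range ⇑wB) := by
        rw [← Set.range_comp]; rfl
      rw [this, ← Submodule.map_span, wB.span_eq, Submodule.map_top, Submodule.range_subtype]
    refine le_trans (le_of_eq hKeq) (Submodule.span_mono ?_)
    rintro _ ⟨j, rfl⟩
    have hjlt : (j : ℕ) < n - s := lt_of_lt_of_le j.2 hdimK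
    refine ⟨⟨j, hjlt⟩, ?_⟩
    simp only [hpad]
    rw [dif_pos (show ((⟨(j : ℕ), hjlt⟩ : Fin (n - s)) : ℕ) < t from j.2)]
  -- choose lifts
  have hKmem : ∀ x : K, ∃ y, y ∈ LinearMap.ker φ ∧ p y = (x : V ⧸ (m • ⊤ : Submodule R V)) := by
    intro x
    obtain ⟨y, hy, hyeq⟩ := (hmemK x).mp x.2
    exact ⟨y, hy, hyeq⟩
  set w : Fin (n - s) → V := fun j => (hKmem (pad j)).choose with hw
  have hwker : ∀ j, w j ∈ LinearMap.ker φ := fun j => (hKmem (pad j)).choose_spec.1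
  have hwp : ∀ j, p (w j) = ((pad j : V ⧸ (m • ⊤ : Submodule R V))) :=
    fun j => (hKmem (pad j)).choose_spec.2
  -- the full family
  set f : Fin n → V := fun i =>
    if h : (i : ℕ) < s then u ⟨i, h⟩ else w ⟨(i : ℕ) - s, by omega⟩ with hf
  have hfu : ∀ (i : Fin n) (h : (i : ℕ) < s), f i = u ⟨i, h⟩ := by
    intro i h; simp only [hf]; rw [dif_pos h]
  have hfw : ∀ (i : Fin n) (h : ¬ (i : ℕ) < s), f i = w ⟨(i : ℕ) - s, by omega⟩ := by
    intro i h; simp only [hf]; rw [dif_neg h]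
  -- p ∘ f spans the quotient
  have hpf_span : Submodule.span (R ⧸ m) (Set.range fun i : Fin n => p (f i)) = ⊤ := by
    rw [eq_top_iff, ← hKtop]
    refine sup_le ?_ ?_
    · refine le_trans hKle (Submodule.span_mono ?_)
      rintro _ ⟨j, rfl⟩
      have hjn : s + (j : ℕ) < n := by omega
      refine ⟨⟨s + (j : ℕ), hjn⟩, ?_⟩
      show p (f ⟨s + (j : ℕ), hjn⟩) = _
      have hns : ¬ ((⟨s + (j : ℕ), hjn⟩ : Fin n) : ℕ) < s := by simp
      rw [hfw _ hns, hwp]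
      congr 1
      ext
      simp
    · refine Submodule.span_le.2 ?_
      rintro _ ⟨j, rfl⟩
      have hjn : (j : ℕ) < n := lt_of_lt_of_le j.2 hs
      refine Submodule.subset_span ⟨⟨j, hjn⟩, ?_⟩
      show p (f ⟨(j : ℕ), hjn⟩) = _
      rw [hfu _ (show ((⟨(j : ℕ), hjn⟩ : Fin n) : ℕ) < s from j.2)]
  -- Nakayama: f spans V
  have hfspan : ⊤ ≤ Submodule.span R (Set.range f) := by
    have hstep : (⊤ : Submodule R V) ≤ Submodule.span R (Set.range f) ⊔ m • ⊤ := by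
      intro x _
      have hx : p x ∈ Submodule.span (R ⧸ m) (Set.range fun i : Fin n => p (f i)) := by
        rw [hpf_span]; trivial
      obtain ⟨g, hg⟩ := (Submodule.mem_span_range_iff_exists_fun (R ⧸ m)).mp hx
      set c : Fin n → R := fun i => (Ideal.Quotient.mk_surjective (g i)).choose with hc
      have hcs : ∀ i, Ideal.Quotient.mk m (c i) = g i :=
        fun i => (Ideal.Quotient.mk_surjective (g i)).choose_spec
      have hker : x - ∑ i, c i • f i ∈ (m • ⊤ : Submodule R V) := by
        rw [← Submodule.Quotient.mk_eq_zero (m • ⊤)]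
        have : p (x - ∑ i, c i • f i) = 0 := by
          rw [map_sub, map_sum]
          simp only [map_smul]
          rw [sub_eq_zero, ← hg]
          refine Finset.sum_congr rfl fun i _ => ?_
          rw [← hcs i, hksmul]
        exact this
      have hxeq : x = (∑ i, c i • f i) + (x - ∑ i, c i • f i) := by abel
      rw [hxeq]
      refine Submodule.add_mem_sup ?_ hker
      exact Submodule.sum_mem _ fun i _ =>
        Submodule.smul_mem _ _ (Submodule.subset_span ⟨i, rfl⟩)
    have hFG : (⊤ : Submodule R V).FG := Module.finite_def.mp ‹Module.Finite R V›
    have hjac : m ≤ (⊥ : Ideal R).jacobson := by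
      rw [IsLocalRing.jacobson_eq_maximalIdeal (⊥ : Ideal R) bot_ne_top]
    exact Submodule.le_of_le_smul_of_le_jacobson_bot hFG hjac hstep
  -- f is a basis
  set T : V →ₗ[R] V := (Module.Basis.constr bV ℕ) f with hT
  have hTb : ∀ i, T (bV i) = f i := fun i => Module.Basis.constr_basis bV ℕ f i
  have hTsurj : Function.Surjective T := by
    rw [← LinearMap.range_eq_top, eq_top_iff]
    refine le_trans hfspan (Submodule.span_le.2 ?_)
    rintro _ ⟨i, rfl⟩
    exact ⟨bV i, hTb i⟩
  have hTinj : Function.Injective T :=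
    OrzechProperty.injective_of_surjective_endomorphism T hTsurj
  set e : V ≃ₗ[R] V := LinearEquiv.ofBijective T ⟨hTinj, hTsurj⟩ with he
  set fB : Module.Basis (Fin n) R V := bV.map e with hfB
  have hfBa : ∀ i, fB i = f i := by
    intro i
    rw [hfB, Module.Basis.map_apply]
    show T (bV i) = f i
    exact hTb i
  refine ⟨fB, ?_, ?_⟩
  · intro i h
    rw [hfBa i, hfu i h, huspec]
  · intro i h
    rw [hfBa i, hfw i h]
    exact LinearMap.mem_ker.mp (hwker _)


/-- Let `R` be a commutative local ring, `π ∈ R` a nonzerodivisor, and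
`n ≥ 1`. Let `V` be a free `R`-module of rank `n`, let `φ : V → (R/πR)^s` be a surjective
`R`-linear map (`0 ≤ s ≤ n`) and let `V' = ker φ ⊆ V`. Then `V'` is a free `R`-module of
rank `n`, and the image of the induced map on `n`-th exterior powers `Λⁿ V' → Λⁿ V` is
exactly the submodule `π^s · Λⁿ V`. -/
theorem exteriorPower_image_of_ker_onto_quotient_powers
    (R : Type u) [CommRing R] [IsLocalRing R] (π : R) (hπ : π ∈ nonZeroDivisors R)
    (n s : ℕ) (hn : 1 ≤ n) (hs : s ≤ n)
    (V : Type v) [AddCommGroup V] [Module R V] (bV : Module.Basis (Fin n) R V)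
    (φ : V →ₗ[R] (Fin s → R ⧸ Ideal.span {π})) (hφ : Function.Surjective φ) :
    Nonempty (Module.Basis (Fin n) R (LinearMap.ker φ)) ∧
    Submodule.map (ExteriorAlgebra.map (LinearMap.ker φ).subtype).toLinearMap
        (⋀[R]^n (LinearMap.ker φ))
      = Ideal.span {π ^ s} • (⋀[R]^n V) := by
  by_cases hunit : IsUnit π
  · haveI : Subsingleton (R ⧸ Ideal.span {π}) :=
      Ideal.Quotient.subsingleton_iff.mpr (Ideal.span_singleton_eq_top.mpr hunit)
    exact auxFinish π hπ hs φ bV (fun i h => Subsingleton.elim _ _)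
      (fun i h => Subsingleton.elim _ _)
  · obtain ⟨fB, h1, h2⟩ := auxConstruct π hunit hs bV φ hφ
    exact auxFinish π hπ hs φ fB h1 h2
end

section
/- Let R be a commutative ring, n ≥ 1, and let V₁ and V₂ be finitely generated projective R-modules of constant rank n. If there is an isomorphism of R-algebras End_R(V₁) ≅ End_R(V₂), then there exists a finitely generated projective R-module L of constant rank 1 and an isomorphism of R-modules V₁ ≅ V₂ ⊗_R L. -/
open scoped TensorProduct

set_option synthInstance.maxHeartbeats 1000000
set_option maxHeartbeats 1000000
set_option maxSynthPendingDepth 3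

universe u v

/-- A module `V` over a commutative ring `R` has constant rank `n` if for every prime ideal
`P` of `R` the localization of `V` at `P` is a free module of rank `n` over the local ring
`R_P`. -/
def HasConstantRank (R : Type u) [CommRing R] (V : Type v) [AddCommGroup V] [Module R V]
    (n : ℕ) : Prop :=
  ∀ (P : Ideal R) (_ : P.IsPrime),
    Nonempty (Module.Basis (Fin n) (Localization P.primeCompl) (LocalizedModule P.primeCompl V))

/-- A finitely generated projective module admits a finite "dual family". -/
lemma exists_dual_family (R : Type u) [CommRing R] (V : Type v) [AddCommGroup V] [Module R V]
    [Module.Finite R V] [Module.Projective R V] :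
    ∃ (k : ℕ) (x : Fin k → V) (g : Fin k → (V →ₗ[R] R)), ∀ v : V, ∑ i, g i v • x i = v := by
  obtain ⟨m, p, hp⟩ := Module.Finite.exists_fin' R V
  obtain ⟨s, hs⟩ := Module.projective_lifting_property p LinearMap.id hp
  set sing : Fin m → (Fin m → R) := fun i => Pi.single i 1 with hsing
  refine ⟨m, fun i => p (sing i), fun i => (LinearMap.proj i).comp s, fun v => ?_⟩
  have h1 : ∑ i, ((LinearMap.proj i).comp s) v • p (sing i)
      = p (∑ i, s v i • sing i) := by
    rw [map_sum]
    simp only [LinearMap.comp_apply, LinearMap.proj_apply, map_smul]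
  have h2 : (∑ i, s v i • sing i) = s v := by
    ext j
    simp [hsing, Pi.single_apply, Finset.sum_apply, mul_ite]
  rw [h1, h2]
  have := LinearMap.ext_iff.mp hs v
  simpa using this

/-- A f.g. projective module which is nontrivial at every prime has a "trace one" family. -/
lemma exists_trace_one (R : Type u) [CommRing R] (V : Type v) [AddCommGroup V] [Module R V]
    [Module.Finite R V] [Module.Projective R V]
    (hV : ∀ (P : Ideal R) (_ : P.IsPrime), Nontrivial (LocalizedModule P.primeCompl V)) :
    ∃ (k : ℕ) (f : Fin k → (V →ₗ[R] R)) (v : Fin k → V), ∑ i, f i (v i) = 1 := by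
  classical
  set S : Set R := Set.range (fun p : (V →ₗ[R] R) × V => p.1 p.2) with hSdef
  have hone : (1 : R) ∈ Submodule.span R S := by
    by_contra h1
    have hne : Submodule.span R S ≠ ⊤ := fun h => h1 (h ▸ Submodule.mem_top)
    obtain ⟨mI, hmax, hle⟩ := Ideal.exists_le_maximal _ hne
    obtain ⟨k, x, g, hdual⟩ := exists_dual_family R V
    have hsm : (⊤ : Submodule R V) ≤ mI • (⊤ : Submodule R V) := by
      intro v _
      rw [← hdual v]
      refine Submodule.sum_mem _ fun i _ => Submodule.smul_mem_smul ?_ Submodule.mem_top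
      exact hle (Submodule.subset_span ⟨(g i, v), rfl⟩)
    obtain ⟨r, hr1, hr0⟩ :=
      Submodule.exists_sub_one_mem_and_smul_eq_zero_of_fg_of_le_smul mI ⊤ Module.Finite.fg_top hsm
    have hrP : r ∈ mI.primeCompl := by
      intro hr
      have h1m : (1 : R) ∈ mI := by
        have := mI.sub_mem hr hr1
        simpa using this
      exact hmax.ne_top ((Ideal.eq_top_iff_one _).2 h1m)
    have hzero : ∀ y : LocalizedModule mI.primeCompl V, y = 0 := by
      intro y
      induction y using LocalizedModule.induction_on with
      | _ m s =>
        rw [← LocalizedModule.zero_mk (1 : mI.primeCompl), LocalizedModule.mk_eq]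
        refine ⟨⟨r, hrP⟩, ?_⟩
        have : r • m = 0 := hr0 m Submodule.mem_top
        simp [this]
    haveI := hV mI hmax.isPrime
    obtain ⟨a, b, hab⟩ := exists_pair_ne (LocalizedModule mI.primeCompl V)
    exact hab ((hzero a).trans (hzero b).symm)
  rw [Submodule.mem_span_set'] at hone
  obtain ⟨k, c, gs, hg⟩ := hone
  choose p hp using fun i => (gs i).2
  refine ⟨k, fun i => (p i).1, fun i => c i • (p i).2, ?_⟩
  have hterm : ∀ i, (p i).1 (c i • (p i).2) = c i • ((gs i : R)) := by
    intro i
    rw [map_smul]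
    exact congrArg (c i • ·) (hp i)
  rw [Finset.sum_congr rfl fun i _ => hterm i]
  exact hg

theorem exists_rank_one_twist_of_end_algEquiv
    (R : Type u) [CommRing R] (n : ℕ) (hn : 1 ≤ n)
    (V₁ : Type v) [AddCommGroup V₁] [Module R V₁]
    (V₂ : Type v) [AddCommGroup V₂] [Module R V₂]
    [Module.Finite R V₁] [Module.Projective R V₁] (h₁ : HasConstantRank R V₁ n)
    [Module.Finite R V₂] [Module.Projective R V₂] (h₂ : HasConstantRank R V₂ n)
    (e : Nonempty ((Module.End R V₁) ≃ₐ[R] (Module.End R V₂))) :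
    ∃ (L : Type v) (_ : AddCommGroup L) (_ : Module R L),
      Module.Finite R L ∧ Module.Projective R L ∧ HasConstantRank R L 1 ∧
      Nonempty (V₁ ≃ₗ[R] V₂ ⊗[R] L) := by
  classical
  obtain ⟨φ⟩ := e
  -- `L` is the submodule of `Hom_R(V₂, V₁)` of `End_R(V₂)`-equivariant maps, where
  -- `End_R(V₂)` acts on `V₁` through `φ.symm`.
  let L : Submodule R (V₂ →ₗ[R] V₁) :=
    { carrier := {f | ∀ a : Module.End R V₂, f ∘ₗ a = (φ.symm a) ∘ₗ f}
      add_mem' := by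
        intro f g hf hg a
        rw [LinearMap.add_comp, LinearMap.comp_add, hf a, hg a]
      zero_mem' := by
        intro a
        rw [LinearMap.zero_comp, LinearMap.comp_zero]
      smul_mem' := by
        intro c f hf a
        rw [LinearMap.smul_comp, LinearMap.comp_smul, hf a] }
  -- `lam g m` is the map `w ↦ φ.symm (g ⊙ w) m` where `(g ⊙ w) x = g x • w`.
  let lam : (V₂ →ₗ[R] R) → V₁ →ₗ[R] (V₂ →ₗ[R] V₁) := fun g =>
    (φ.symm.toLinearMap ∘ₗ (LinearMap.smulRightₗ g)).flip
  have hlam_apply : ∀ g m w, lam g m w = φ.symm (LinearMap.smulRightₗ g w) m :=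
    fun _ _ _ => rfl
  have hsm : ∀ (g : V₂ →ₗ[R] R) (w : V₂) (a : Module.End R V₂),
      LinearMap.smulRightₗ g (a w) = a * (LinearMap.smulRightₗ g w) := by
    intro g w a
    ext x
    simp [LinearMap.smulRightₗ_apply, Module.End.mul_apply, map_smul]
  have hlam_mem : ∀ (g : V₂ →ₗ[R] R) (m : V₁), lam g m ∈ L := by
    intro g m a
    ext w
    simp only [LinearMap.comp_apply]
    rw [hlam_apply, hlam_apply, hsm, map_mul]
    rfl
  let lamL : (V₂ →ₗ[R] R) → V₁ →ₗ[R] ↥L := fun g => (lam g).codRestrict L (hlam_mem g)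
  have hlamL_coe : ∀ (g : V₂ →ₗ[R] R) (m : V₁), ((lamL g m : ↥L) : V₂ →ₗ[R] V₁) = lam g m :=
    fun _ _ => rfl
  have hLval : ∀ (f : ↥L) (a : Module.End R V₂) (w : V₂),
      (f : V₂ →ₗ[R] V₁) (a w) = φ.symm a ((f : V₂ →ₗ[R] V₁) w) := by
    intro f a w
    exact LinearMap.ext_iff.mp (f.2 a) w
  have hlam_f : ∀ (g : V₂ →ₗ[R] R) (f : ↥L) (w : V₂),
      lamL g ((f : V₂ →ₗ[R] V₁) w) = g w • f := by
    intro g f w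
    apply Subtype.ext
    ext y
    show lam g ((f : V₂ →ₗ[R] V₁) w) y = g w • (f : V₂ →ₗ[R] V₁) y
    rw [hlam_apply, ← hLval f (LinearMap.smulRightₗ g y) w]
    simp [LinearMap.smulRightₗ_apply, map_smul]
  -- dual family of V₂
  obtain ⟨k, x, g, hdual⟩ := exists_dual_family R V₂
  have hsum_one : ∑ j, LinearMap.smulRightₗ (g j) (x j) = (1 : Module.End R V₂) := by
    ext w
    simp only [LinearMap.sum_apply, LinearMap.smulRightₗ_apply, Module.End.one_apply]
    exact hdual w
  -- the evaluation map and its inverse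
  let ev : V₂ ⊗[R] ↥L →ₗ[R] V₁ :=
    (TensorProduct.lift (L.subtype)) ∘ₗ (TensorProduct.comm R V₂ ↥L).toLinearMap
  have hev : ∀ (w : V₂) (f : ↥L), ev (w ⊗ₜ f) = (f : V₂ →ₗ[R] V₁) w := fun _ _ => rfl
  let β : V₁ →ₗ[R] V₂ ⊗[R] ↥L := ∑ j, (TensorProduct.mk R V₂ ↥L (x j)) ∘ₗ (lamL (g j))
  have hβ : ∀ m, β m = ∑ j, x j ⊗ₜ (lamL (g j) m) := by
    intro m
    show (∑ j, (TensorProduct.mk R V₂ ↥L (x j)) ∘ₗ (lamL (g j))) m = _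
    rw [LinearMap.sum_apply]
    rfl
  have h1 : ev ∘ₗ β = LinearMap.id := by
    ext m
    simp only [LinearMap.comp_apply, LinearMap.id_apply]
    rw [hβ, map_sum]
    have hterm : ∀ j, ev (x j ⊗ₜ lamL (g j) m) = φ.symm (LinearMap.smulRightₗ (g j) (x j)) m :=
      fun j => rfl
    rw [Finset.sum_congr rfl fun j _ => hterm j]
    have : ∑ j, φ.symm (LinearMap.smulRightₗ (g j) (x j)) m
        = (∑ j, φ.symm (LinearMap.smulRightₗ (g j) (x j))) m := by
      rw [LinearMap.sum_apply]
    rw [this, ← map_sum φ.symm _ Finset.univ, hsum_one, map_one]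
    rfl
  have h2 : β ∘ₗ ev = LinearMap.id := by
    apply TensorProduct.ext'
    intro w f
    simp only [LinearMap.comp_apply, LinearMap.id_apply]
    rw [hev, hβ]
    have hterm : ∀ j, (x j) ⊗ₜ[R] (lamL (g j) ((f : V₂ →ₗ[R] V₁) w))
        = (g j w • x j) ⊗ₜ[R] f := by
      intro j
      rw [hlam_f, TensorProduct.tmul_smul, TensorProduct.smul_tmul']
    rw [Finset.sum_congr rfl fun j _ => hterm j, ← TensorProduct.sum_tmul, hdual w]
  let eqv : V₁ ≃ₗ[R] V₂ ⊗[R] ↥L := (LinearEquiv.ofLinear ev β h1 h2).symm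
  -- the trace-one family for V₂
  have hV₂nt : ∀ (P : Ideal R) (_ : P.IsPrime), Nontrivial (LocalizedModule P.primeCompl V₂) := by
    intro P hP
    obtain ⟨b⟩ := h₂ P hP
    exact ⟨b ⟨0, hn⟩, 0, b.ne_zero _⟩
  obtain ⟨kt, ft, vt, htr⟩ := exists_trace_one R V₂ hV₂nt
  -- the projection from Hom_R(V₂, V₁) onto L
  let π : (V₂ →ₗ[R] V₁) →ₗ[R] ↥L := ∑ i, (lamL (ft i)) ∘ₗ (LinearMap.applyₗ (vt i))
  have hπ : ∀ f : ↥L, π (f : V₂ →ₗ[R] V₁) = f := by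
    intro f
    show (∑ i, (lamL (ft i)) ∘ₗ (LinearMap.applyₗ (vt i))) (f : V₂ →ₗ[R] V₁) = f
    rw [LinearMap.sum_apply]
    have hterm : ∀ i, ((lamL (ft i)) ∘ₗ (LinearMap.applyₗ (vt i))) (f : V₂ →ₗ[R] V₁)
        = ft i (vt i) • f := by
      intro i
      exact hlam_f (ft i) f (vt i)
    rw [Finset.sum_congr rfl fun i _ => hterm i, ← Finset.sum_smul, htr, one_smul]
  -- `Hom_R(V₂, V₁)` is finite and projective
  obtain ⟨m2, p2, hp2⟩ := Module.Finite.exists_fin' R V₂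
  obtain ⟨sec, hsec⟩ := Module.projective_lifting_property p2 LinearMap.id hp2
  let iH : (V₂ →ₗ[R] V₁) →ₗ[R] ((Fin m2 → R) →ₗ[R] V₁) := LinearMap.lcomp R V₁ p2
  let sH : ((Fin m2 → R) →ₗ[R] V₁) →ₗ[R] (V₂ →ₗ[R] V₁) := LinearMap.lcomp R V₁ sec
  have hsi : ∀ h : V₂ →ₗ[R] V₁, sH (iH h) = h := by
    intro h
    show (h ∘ₗ p2) ∘ₗ sec = h
    rw [LinearMap.comp_assoc, hsec, LinearMap.comp_id]
  haveI hPpi : Module.Projective R (Fin m2 → V₁) := by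
    refine Module.Projective.of_equiv (M := Π₀ _ : Fin m2, V₁)
      (show (Π₀ _ : Fin m2, V₁) ≃ₗ[R] (Fin m2 → V₁) from
      { DFinsupp.equivFunOnFintype with
        map_add' := fun a b => rfl
        map_smul' := fun c a => rfl })
  let G : ((Fin m2 → R) →ₗ[R] V₁) ≃ₗ[R] (Fin m2 → V₁) :=
    (LinearMap.lsum R (fun _ : Fin m2 => R) R).symm ≪≫ₗ
      LinearEquiv.piCongrRight (fun _ => LinearMap.ringLmapEquivSelf R R V₁)
  haveI hHproj : Module.Projective R ((Fin m2 → R) →ₗ[R] V₁) := Module.Projective.of_equiv G.symm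
  haveI hHfin : Module.Finite R ((Fin m2 → R) →ₗ[R] V₁) := inferInstance
  haveI hHfin' : Module.Finite R (V₂ →ₗ[R] V₁) :=
    Module.Finite.of_surjective sH (fun h => ⟨iH h, hsi h⟩)
  haveI hHproj' : Module.Projective R (V₂ →ₗ[R] V₁) :=
    Module.Projective.of_split iH sH (LinearMap.ext hsi)
  haveI hLfin : Module.Finite R ↥L :=
    Module.Finite.of_surjective π (fun f => ⟨(f : V₂ →ₗ[R] V₁), hπ f⟩)
  haveI hLproj : Module.Projective R ↥L :=
    Module.Projective.of_split L.subtype π (LinearMap.ext hπ)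
  -- the rank computation
  have hL1 : HasConstantRank R ↥L 1 := by
    intro P hP
    obtain ⟨b₁⟩ := h₁ P hP
    obtain ⟨b₂⟩ := h₂ P hP
    let bcV₁ : (Localization P.primeCompl) ⊗[R] V₁
        ≃ₗ[Localization P.primeCompl] LocalizedModule P.primeCompl V₁ :=
      (IsLocalizedModule.isBaseChange P.primeCompl (Localization P.primeCompl)
        (LocalizedModule.mkLinearMap P.primeCompl V₁)).equiv
    let bcV₂ : (Localization P.primeCompl) ⊗[R] V₂
        ≃ₗ[Localization P.primeCompl] LocalizedModule P.primeCompl V₂ :=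
      (IsLocalizedModule.isBaseChange P.primeCompl (Localization P.primeCompl)
        (LocalizedModule.mkLinearMap P.primeCompl V₂)).equiv
    let bcL : (Localization P.primeCompl) ⊗[R] ↥L
        ≃ₗ[Localization P.primeCompl] LocalizedModule P.primeCompl ↥L :=
      (IsLocalizedModule.isBaseChange P.primeCompl (Localization P.primeCompl)
        (LocalizedModule.mkLinearMap P.primeCompl ↥L)).equiv
    let e2 : LocalizedModule P.primeCompl V₁ ≃ₗ[Localization P.primeCompl]
        ((Localization P.primeCompl) ⊗[R] V₂)
          ⊗[Localization P.primeCompl] ((Localization P.primeCompl) ⊗[R] ↥L) :=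
      bcV₁.symm ≪≫ₗ LinearEquiv.baseChange R (Localization P.primeCompl) V₁ (V₂ ⊗[R] ↥L) eqv
        ≪≫ₗ TensorProduct.AlgebraTensorModule.distribBaseChange R (Localization P.primeCompl) V₂ ↥L
    haveI freeV2 : Module.Free (Localization P.primeCompl)
        ((Localization P.primeCompl) ⊗[R] V₂) :=
      Module.Free.of_basis (b₂.map bcV₂.symm)
    haveI projL : Module.Projective (Localization P.primeCompl)
        ((Localization P.primeCompl) ⊗[R] ↥L) := inferInstance
    haveI fpL : Module.FinitePresentation (Localization P.primeCompl)
        ((Localization P.primeCompl) ⊗[R] ↥L) :=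
      Module.finitePresentation_of_projective _ _
    haveI freeL : Module.Free (Localization P.primeCompl)
        ((Localization P.primeCompl) ⊗[R] ↥L) :=
      Module.free_of_flat_of_isLocalRing
    have hfr1 : Module.finrank (Localization P.primeCompl)
        (LocalizedModule P.primeCompl V₁) = n := by
      rw [Module.finrank_eq_card_basis b₁, Fintype.card_fin]
    have hfrV2 : Module.finrank (Localization P.primeCompl)
        ((Localization P.primeCompl) ⊗[R] V₂) = n := by
      rw [Module.finrank_eq_card_basis (b₂.map bcV₂.symm), Fintype.card_fin]
    have hk : Module.finrank (Localization P.primeCompl)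
        ((Localization P.primeCompl) ⊗[R] ↥L) = 1 := by
      refine Nat.eq_of_mul_eq_mul_left (show 0 < n by omega) ?_
      rw [mul_one, ← hfrV2, ← Module.finrank_tensorProduct, ← e2.finrank_eq, hfr1]
      exact hfrV2.symm
    haveI : Module.Finite (Localization P.primeCompl) (LocalizedModule P.primeCompl ↥L) :=
      Module.Finite.equiv bcL
    haveI : Module.Free (Localization P.primeCompl) (LocalizedModule P.primeCompl ↥L) :=
      Module.Free.of_equiv bcL
    have hk' : Module.finrank (Localization P.primeCompl)
        (LocalizedModule P.primeCompl ↥L) = 1 := by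
      rw [← bcL.finrank_eq]
      exact hk
    exact ⟨Module.finBasisOfFinrankEq _ _ hk'⟩
  exact ⟨↥L, inferInstance, inferInstance, hLfin, hLproj, hL1, ⟨eqv⟩⟩
end
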